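/- arXiv:2303.15222 — 6 statements merged into one kernel-verified Lean document; each statement's English description precedes it below -/
import Mathlib

section
/- Let x_0, …, x_n be distinct points of ℂ, let l(s) = ∏_{i=0}^n (s - x_i), and let ℓ_i(x) = ∏_{j≠i} (x - x_j)/(x_i - x_j) denote the Lagrange basis polynomials. Then for every t ∈ ℂ with t ∉ {x_0, …, x_n} and every x ∈ ℂ with x ≠ t, one has ∑_{i=0}^n (1/(t - x_i))·ℓ_i(x) = (1 - l(x)/l(t))/(t - x); that is, the Lagrange interpolant of the Cauchy kernel s ↦ 1/(t - s) at the nodes x_0, …, x_n equals (1/(t - x))(1 - l(x)/l(t)). -/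
open Finset Polynomial

/-- The Lagrange interpolant of the Cauchy kernel `s ↦ 1/(t - s)` at distinct nodes
`x_0, …, x_n` equals `(1/(t - x)) (1 - l(x)/l(t))`, where `l(s) = ∏ (s - x_i)`. -/
theorem lagrange_interpolant_cauchy_kernel (n : ℕ) (x : Fin (n + 1) → ℂ)
    (hx : Function.Injective x)
    (l : ℂ → ℂ) (hl : ∀ s, l s = ∏ i, (s - x i))
    (t : ℂ) (ht : ∀ i, t ≠ x i) (X : ℂ) (hX : X ≠ t) :
    ∑ i, (1 / (t - x i)) * ∏ j ∈ univ.erase i, (X - x j) / (x i - x j)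
      = (1 - l X / l t) / (t - X) := by
  classical
  have hlt : l t ≠ 0 := by
    rw [hl]
    exact Finset.prod_ne_zero_iff.mpr fun i _ => sub_ne_zero_of_ne (ht i)
  have htX : t - X ≠ 0 := sub_ne_zero.mpr (Ne.symm hX)
  set L : Polynomial ℂ := ∏ i, (Polynomial.X - Polynomial.C (x i)) with hLdef
  have hevalL : ∀ s, L.eval s = l s := fun s => by
    simp [hLdef, hl s, Polynomial.eval_prod]
  obtain ⟨g, hg⟩ := Polynomial.X_sub_C_dvd_sub_C_eval (a := t) (p := L)
  have hgeval : ∀ s, l s - l t = (s - t) * g.eval s := fun s => by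
    have h := congrArg (Polynomial.eval s) hg
    simpa [hevalL] using h
  have hgnode : ∀ i, g.eval (x i) = l t / (t - x i) := by
    intro i
    have h1 := hgeval (x i)
    have hlx : l (x i) = 0 := by
      rw [hl]
      exact Finset.prod_eq_zero (mem_univ i) (sub_self _)
    rw [hlx] at h1
    rw [eq_div_iff (sub_ne_zero_of_ne (ht i))]
    linear_combination h1
  -- degree of L
  have hdegL : L.degree = (n + 1 : ℕ) := by
    rw [hLdef, Polynomial.degree_prod]
    simp [Polynomial.degree_X_sub_C]
  have hdegsub : (L - Polynomial.C (L.eval t)).degree = (n + 1 : ℕ) := by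
    rw [Polynomial.degree_sub_eq_left_of_degree_lt]
    · exact hdegL
    · rw [hdegL]
      exact lt_of_le_of_lt (Polynomial.degree_C_le) (by exact_mod_cast WithBot.coe_lt_coe.mpr (Nat.succ_pos n))
  have hdegg : g.degree < ((univ : Finset (Fin (n + 1))).card : ℕ) := by
    have hXt : (Polynomial.X - Polynomial.C t).degree = 1 := Polynomial.degree_X_sub_C t
    have hg0 : g ≠ 0 := by
      rintro rfl
      rw [mul_zero] at hg
      rw [hg, Polynomial.degree_zero] at hdegsub
      rw [Nat.cast_withBot] at hdegsub
      exact WithBot.bot_ne_coe hdegsub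
    have hmul : (1 : WithBot ℕ) + g.degree = (n + 1 : ℕ) := by
      rw [← hXt, ← Polynomial.degree_mul, ← hg, hdegsub]
    rw [Polynomial.degree_eq_natDegree hg0] at hmul ⊢
    rw [Finset.card_univ, Fintype.card_fin]
    have : 1 + g.natDegree = n + 1 := by exact_mod_cast hmul
    exact_mod_cast Nat.lt_succ_of_le (by omega)
  have key := Lagrange.eq_interpolate (v := x) (s := univ) hx.injOn hdegg
  have keyX := congrArg (Polynomial.eval X) key
  rw [Lagrange.interpolate_apply, Polynomial.eval_finset_sum] at keyX
  -- rewrite each basis evaluation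
  have hbasis : ∀ i, Polynomial.eval X (Polynomial.C (g.eval (x i)) * Lagrange.basis univ x i)
      = (l t / (t - x i)) * ∏ j ∈ univ.erase i, (X - x j) / (x i - x j) := by
    intro i
    rw [Polynomial.eval_mul, Polynomial.eval_C, hgnode i, Lagrange.basis, Polynomial.eval_prod]
    congr 1
    refine Finset.prod_congr rfl fun j _ => ?_
    simp [Lagrange.basisDivisor, div_eq_inv_mul, mul_comm]
  simp_rw [hbasis] at keyX
  -- keyX : g.eval X = ∑ i, (l t / (t - x i)) * ∏ ...
  have hgX : g.eval X = (l t - l X) / (t - X) := by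
    have h1 := hgeval X
    rw [eq_div_iff htX]
    linear_combination h1
  rw [hgX] at keyX
  have : ∑ i, (1 / (t - x i)) * ∏ j ∈ univ.erase i, (X - x j) / (x i - x j)
      = (1 / l t) * ∑ i, (l t / (t - x i)) * ∏ j ∈ univ.erase i, (X - x j) / (x i - x j) := by
    rw [Finset.mul_sum]
    refine Finset.sum_congr rfl fun i _ => ?_
    rw [← mul_assoc]
    congr 1
    field_simp
  rw [this, ← keyX]
  field_simp
end

section
/- Let c ∈ ℂ, r > 0, and let f : ℂ → ℂ be complex-differentiable on an open set containing the closed disk {z : |z - c| ≤ r}. Let x_0, …, x_n be distinct points in the open disk {z : |z - c| < r}, let l(s) = ∏_{i=0}^n (s - x_i), and let P_n(x) = ∑_{i=0}^n f(x_i) ∏_{j≠i} (x - x_j)/(x_i - x_j) be the Lagrange interpolating polynomial of f at these nodes. Then for every x in the open disk {z : |z - c| < r}, f(x) - P_n(x) = (1/(2πi)) ∮_{|t-c|=r} (l(x)/l(t))·(f(t)/(t - x)) dt, where the integral is the circle integral over the circle of center c and radius r. -/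
/-!
For `t` off the nodes, `s ↦ (l s - l t) / (s - t)` is a polynomial of degree `n` taking the
value `l t / (t - xᵢ)` at `xᵢ`, so it is its own Lagrange interpolant. Dividing by `l t` gives the
partial fraction expansion `l X / (l t (t - X)) = 1 / (t - X) - ∑ Lᵢ(X) / (t - xᵢ)`; multiplying
by `f t` and applying Cauchy's formula termwise on the circle yields `2πi (f X - P X)`.
-/

open Finset

namespace Lagrange

open Polynomial

variable {F ι : Type*} [Field F] [DecidableEq ι] {s : Finset ι} {v : ι → F}

theorem eval_basis (i : ι) (x : F) :
    (Lagrange.basis s v i).eval x = ∏ j ∈ s.erase i, (x - v j) / (v i - v j) := by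
  simp only [Lagrange.basis, basisDivisor, eval_prod, eval_mul, eval_C, eval_sub, eval_X,
    inv_mul_eq_div]

theorem nodal_sub_C_eval_eq_X_sub_C_mul_interpolate (hvs : Set.InjOn v s) {t : F}
    (ht : ∀ i ∈ s, t ≠ v i) :
    nodal s v - C ((nodal s v).eval t) =
      (X - C t) * interpolate s v (fun i => (nodal s v).eval t / (t - v i)) := by
  set p := nodal s v - C ((nodal s v).eval t)
  have hroot : p.IsRoot t := by simp [p]
  rw [← (mul_divByMonic_eq_iff_isRoot).2 hroot]
  congr 1
  refine eq_interpolate_of_eval_eq _ hvs ?_ fun i hi => ?_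
  · have hp : p.degree ≤ #s :=
      (degree_sub_le _ _).trans (max_le (degree_nodal).le (degree_C_le.trans (by simp)))
    by_cases hp0 : p = 0
    · simp [hp0]
    · exact (degree_divByMonic_lt _ _ hp0 (by simp)).trans_le hp
  · have hvi := congrArg (eval (v i)) ((mul_divByMonic_eq_iff_isRoot).2 hroot)
    simp only [eval_mul, eval_sub, eval_X, eval_C, p, eval_nodal_at_node hi, zero_sub] at hvi
    rw [eq_div_iff (sub_ne_zero.2 (ht i hi))]
    linear_combination -hvi

theorem eval_nodal_div_eval_nodal_div_sub (hvs : Set.InjOn v s) {t x : F}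
    (ht : ∀ i ∈ s, t ≠ v i) (hx : t ≠ x) :
    (nodal s v).eval x / (nodal s v).eval t / (t - x) =
      1 / (t - x) - ∑ i ∈ s, (Lagrange.basis s v i).eval x / (t - v i) := by
  have hlt : (nodal s v).eval t ≠ 0 := eval_nodal_not_at_node ht
  have hxt : t - x ≠ 0 := sub_ne_zero.2 hx
  have key := congrArg (eval x) (nodal_sub_C_eval_eq_X_sub_C_mul_interpolate hvs ht)
  simp only [interpolate_apply, eval_sub, eval_mul, eval_X, eval_C, eval_finsetSum] at key
  have hsum : ∑ i ∈ s, (nodal s v).eval t / (t - v i) * (Lagrange.basis s v i).eval x =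
      (nodal s v).eval t * ∑ i ∈ s, (Lagrange.basis s v i).eval x / (t - v i) := by
    rw [mul_sum]
    exact sum_congr rfl fun i _ => by ring
  rw [hsum] at key
  field_simp
  linear_combination key

end Lagrange

open Metric Complex Lagrange

theorem DifferentiableOn.circleIntegral_div_sub {f : ℂ → ℂ} {c w : ℂ} {R : ℝ}
    (hd : DifferentiableOn ℂ f (closedBall c R)) (hw : w ∈ ball c R) :
    ∮ z in C(c, R), f z / (z - w) = 2 * Real.pi * I * f w := by
  simpa only [smul_eq_mul, div_eq_inv_mul] using hd.circleIntegral_sub_inv_smul hw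

theorem ContinuousOn.circleIntegrable_div_sub {f : ℂ → ℂ} {c w : ℂ} {R : ℝ} (hR : 0 ≤ R)
    (hf : ContinuousOn f (sphere c R)) (hw : w ∉ sphere c R) :
    CircleIntegrable (fun z => f z / (z - w)) c R :=
  (hf.div (continuousOn_id.sub continuousOn_const)
    fun z hz => sub_ne_zero.2 fun h : z = w => hw (h ▸ hz)).circleIntegrable hR

theorem DifferentiableOn.circleIntegral_div_sub_sub_sum {ι : Type*} {s : Finset ι}
    {f : ℂ → ℂ} {c w : ℂ} {R : ℝ} {v : ι → ℂ} (a : ι → ℂ)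
    (hd : DifferentiableOn ℂ f (closedBall c R)) (hw : w ∈ ball c R)
    (hv : ∀ i ∈ s, v i ∈ ball c R) :
    ∮ z in C(c, R), (f z / (z - w) - ∑ i ∈ s, a i * (f z / (z - v i))) =
      2 * Real.pi * I * (f w - ∑ i ∈ s, a i * f (v i)) := by
  have hR : 0 ≤ R := dist_nonneg.trans (mem_ball.1 hw).le
  have hf : ContinuousOn f (sphere c R) := hd.continuousOn.mono sphere_subset_closedBall
  have hint : ∀ u ∈ ball c R, CircleIntegrable (fun z => f z / (z - u)) c R :=
    fun u hu => hf.circleIntegrable_div_sub hR fun h => sphere_disjoint_ball.ne_of_mem h hu rfl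
  have hterm : ∀ i ∈ s, CircleIntegrable (fun z => a i * (f z / (z - v i))) c R :=
    fun i hi => (hint (v i) (hv i hi)).const_smul
  rw [circleIntegral.integral_sub (hint w hw) (CircleIntegrable.fun_sum s hterm),
    circleIntegral.integral_fun_sum hterm, hd.circleIntegral_div_sub hw, mul_sub, mul_sum]
  congr 1
  refine sum_congr rfl fun i hi => ?_
  rw [circleIntegral.integral_const_mul, hd.circleIntegral_div_sub (hv i hi)]
  ring

theorem hermite_integral_formula_polynomial_general (c : ℂ) (r : ℝ) (hr : 0 < r) (f : ℂ → ℂ)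
    (U : Set ℂ) (hUsub : Metric.closedBall c r ⊆ U)
    (hf : DifferentiableOn ℂ f U)
    (n : ℕ) (x : Fin (n + 1) → ℂ) (hx : Function.Injective x)
    (hxball : ∀ i, x i ∈ Metric.ball c r)
    (l : ℂ → ℂ) (hl : ∀ s, l s = ∏ i, (s - x i))
    (P : ℂ → ℂ)
    (hP : ∀ X, P X = ∑ i, f (x i) * ∏ j ∈ univ.erase i, (X - x j) / (x i - x j))
    (X : ℂ) (hX : X ∈ Metric.ball c r) :
    f X - P X = (1 / (2 * (Real.pi : ℂ) * Complex.I)) *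
      ∮ t in C(c, r), (l X / l t) * (f t / (t - X)) := by
  have hl' : ∀ s, l s = (nodal univ x).eval s := fun s => by rw [hl, eval_nodal]
  have hP' : P X = ∑ i, (Lagrange.basis univ x i).eval X * f (x i) := by
    simp only [hP, Lagrange.eval_basis, mul_comm]
  have hpartial : Set.EqOn (fun t => l X / l t * (f t / (t - X)))
      (fun t => f t / (t - X) - ∑ i, (Lagrange.basis univ x i).eval X * (f t / (t - x i)))
      (sphere c r) := fun t ht => by
    have hnode : ∀ i ∈ univ, t ≠ x i := fun i _ => sphere_disjoint_ball.ne_of_mem ht (hxball i)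
    have hpf := Lagrange.eval_nodal_div_eval_nodal_div_sub hx.injOn hnode
      (sphere_disjoint_ball.ne_of_mem ht hX)
    calc l X / l t * (f t / (t - X))
        = f t * ((nodal univ x).eval X / (nodal univ x).eval t / (t - X)) := by
          rw [hl', hl']; ring
      _ = _ := by
          rw [hpf, mul_sub, mul_sum]
          congr 1
          · ring
          · exact sum_congr rfl fun i _ => by ring
  rw [circleIntegral.integral_congr hr.le hpartial,
    (hf.mono hUsub).circleIntegral_div_sub_sub_sum _ hX fun i _ => hxball i, hP']
  field_simp

/-- Hermite integral formula for polynomial (Lagrange) interpolation, with the contour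
taken to be the circle of center `c` and radius `r`. -/
theorem hermite_integral_formula_polynomial (c : ℂ) (r : ℝ) (hr : 0 < r) (f : ℂ → ℂ)
    (U : Set ℂ) (hUopen : IsOpen U) (hUsub : Metric.closedBall c r ⊆ U)
    (hf : DifferentiableOn ℂ f U)
    (n : ℕ) (x : Fin (n + 1) → ℂ) (hx : Function.Injective x)
    (hxball : ∀ i, x i ∈ Metric.ball c r)
    (l : ℂ → ℂ) (hl : ∀ s, l s = ∏ i, (s - x i))
    (P : ℂ → ℂ)
    (hP : ∀ X, P X = ∑ i, f (x i) * ∏ j ∈ univ.erase i, (X - x j) / (x i - x j))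
    (X : ℂ) (hX : X ∈ Metric.ball c r) :
    f X - P X = (1 / (2 * (Real.pi : ℂ) * Complex.I)) *
      ∮ t in C(c, r), (l X / l t) * (f t / (t - X)) :=
  hermite_integral_formula_polynomial_general c r hr f U hUsub hf n x hx hxball l hl P hP X hX
end

section
/- Let c ∈ ℂ, r > 0, and let f : ℂ → ℂ be complex-differentiable on an open set containing the closed disk {z : |z - c| ≤ r}. Let x_0, …, x_n be distinct points in the open disk {z : |z - c| < r}, and let z_1, …, z_m ∈ ℂ with z_j ∉ {x_0, …, x_n} for all j. Set l(s) = ∏_{i=0}^n (s - x_i), q(s) = ∏_{j=1}^m (s - z_j), and define the rational interpolant with poles z_1, …, z_m by r(x) = ∑_{i=0}^n f(x_i)·(q(x_i)/q(x))·∏_{j≠i} (x - x_j)/(x_i - x_j). Then for every x in the open disk {z : |z - c| < r} with q(x) ≠ 0, f(x) - r(x) = (1/(2πi)) ∮_{|t-c|=r} (l(x)·q(t))/(l(t)·q(x))·(f(t)/(t - x)) dt. -/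
/-!
The integrand equals `l X / q X * (q t * f t) / ((t - X) * l t)`. Partial fractions
split `1 / ((t - X) * l t)` into simple poles at `X` and at the nodes, with the barycentric weights
of the nodes as residues. Cauchy's formula turns each pole `w` into a value of `q * f` at `w`: the
pole at `X` gives `f X`, and the nodes give minus the barycentric form of `R X`. When `X` is a node,
both sides vanish.
-/

open Finset Metric Complex Polynomial Lagrange

namespace Lagrange

variable {F : Type*} [Field F] {ι : Type*} [DecidableEq ι] {s : Finset ι} {v : ι → F}

theorem eval_basis_eq_prod (y : F) (i : ι) :
    (Lagrange.basis s v i).eval y = ∏ j ∈ s.erase i, (y - v j) / (v i - v j) := by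
  simp [Lagrange.basis, basisDivisor, eval_prod, div_eq_inv_mul]

theorem inv_prod_sub_eq_sum_nodalWeight (hvs : Set.InjOn v s) (hs : s.Nonempty) {x : F}
    (hx : ∀ i ∈ s, x ≠ v i) :
    (∏ i ∈ s, (x - v i))⁻¹ = ∑ i ∈ s, nodalWeight s v i * (x - v i)⁻¹ := by
  have h := eval_interpolate_not_at_node 1 hx
  rw [interpolate_one hvs hs, eval_one, eval_nodal] at h
  simp only [Pi.one_apply, mul_one] at h
  exact inv_eq_of_mul_eq_one_right h.symm

theorem inv_sub_mul_prod_sub_eq (hvs : Set.InjOn v s) (hs : s.Nonempty) {x y : F}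
    (hx : ∀ i ∈ s, x ≠ v i) (hy : ∀ i ∈ s, y ≠ v i) (hxy : x ≠ y) :
    ((x - y) * ∏ i ∈ s, (x - v i))⁻¹ = (∏ i ∈ s, (y - v i))⁻¹ * (x - y)⁻¹ -
      ∑ i ∈ s, nodalWeight s v i * (y - v i)⁻¹ * (x - v i)⁻¹ := by
  rw [mul_inv, inv_prod_sub_eq_sum_nodalWeight hvs hs hx,
    inv_prod_sub_eq_sum_nodalWeight hvs hs hy, mul_sum, sum_mul, ← sum_sub_distrib]
  refine sum_congr rfl fun i hi => ?_
  have hxi := sub_ne_zero.mpr (hx i hi)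
  have hyi := sub_ne_zero.mpr (hy i hi)
  have hxy' := sub_ne_zero.mpr hxy
  field_simp
  ring

end Lagrange

theorem circleIntegral_sum_mul_sub_inv_mul {ι : Type*} (s : Finset ι) (a w : ι → ℂ) {c : ℂ}
    {R : ℝ} {F : ℂ → ℂ} (hF : DifferentiableOn ℂ F (closedBall c R))
    (hw : ∀ i ∈ s, w i ∈ ball c R) :
    (∮ t in C(c, R), (∑ i ∈ s, a i * (t - w i)⁻¹) * F t) =
      2 * Real.pi * I * ∑ i ∈ s, a i * F (w i) := by
  have hint : ∀ i ∈ s, CircleIntegrable (fun t => a i * ((t - w i)⁻¹ * F t)) c R := by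
    intro i hi
    have hR := pos_of_mem_ball (hw i hi)
    refine ((circleIntegrable_sub_inv_iff.mpr (Or.inr ?_)).mul_continuousOn ?_).const_mul (a i)
    · rw [abs_of_pos hR]
      exact fun h => (mem_ball.mp (hw i hi)).ne (mem_sphere.mp h)
    · rw [abs_of_pos hR]
      exact hF.continuousOn.mono sphere_subset_closedBall
  simp_rw [sum_mul, mul_assoc (a _)]
  rw [circleIntegral.integral_fun_sum hint, mul_sum]
  refine Finset.sum_congr rfl fun i hi => ?_
  have cauchy := hF.circleIntegral_sub_inv_smul (hw i hi)
  simp only [smul_eq_mul] at cauchy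
  rw [circleIntegral.integral_const_mul, cauchy]
  ring

theorem circleIntegral_div_sub_mul_prod_sub {ι : Type*} [DecidableEq ι] {s : Finset ι}
    {v : ι → ℂ} (hvs : Set.InjOn v s) (hs : s.Nonempty) {c y : ℂ} {R : ℝ} {F : ℂ → ℂ}
    (hF : DifferentiableOn ℂ F (closedBall c R)) (hv : ∀ i ∈ s, v i ∈ ball c R)
    (hy : y ∈ ball c R) (hyv : ∀ i ∈ s, y ≠ v i) :
    (∮ t in C(c, R), F t / ((t - y) * ∏ i ∈ s, (t - v i))) =
      2 * Real.pi * I * (F y / ∏ i ∈ s, (y - v i) -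
        ∑ i ∈ s, nodalWeight s v i * (y - v i)⁻¹ * F (v i)) := by
  set w : Option ι → ℂ := fun o => o.elim y v
  set a : Option ι → ℂ :=
    fun o => o.elim (∏ i ∈ s, (y - v i))⁻¹ fun i => -(nodalWeight s v i * (y - v i)⁻¹)
  have hw : ∀ o ∈ insertNone s, w o ∈ ball c R := by
    rintro (_ | i) hi
    exacts [hy, hv i (some_mem_insertNone.mp hi)]
  have hpf : Set.EqOn (fun t => F t / ((t - y) * ∏ i ∈ s, (t - v i)))
      (fun t => (∑ o ∈ insertNone s, a o * (t - w o)⁻¹) * F t) (sphere c R) := by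
    intro t ht
    have ht : ∀ u ∈ ball c R, t ≠ u := fun u hu h => (mem_ball.mp (h ▸ hu)).ne (mem_sphere.mp ht)
    simp only [sum_insertNone, a, w, Option.elim, neg_mul, sum_neg_distrib, ← sub_eq_add_neg]
    rw [← inv_sub_mul_prod_sub_eq hvs hs (fun i hi => ht _ (hv i hi)) hyv (ht y hy), div_eq_mul_inv,
      mul_comm]
  rw [circleIntegral.integral_congr (pos_of_mem_ball hy).le hpf,
    circleIntegral_sum_mul_sub_inv_mul _ _ _ hF hw, sum_insertNone]
  simp only [a, w, Option.elim, neg_mul, sum_neg_distrib]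
  ring

theorem hermite_integral_formula_rational_general (c : ℂ) (r : ℝ) (f : ℂ → ℂ)
    (U : Set ℂ) (hUsub : Metric.closedBall c r ⊆ U)
    (hf : DifferentiableOn ℂ f U)
    (n : ℕ) (x : Fin (n + 1) → ℂ) (hx : Function.Injective x)
    (hxball : ∀ i, x i ∈ Metric.ball c r)
    (m : ℕ) (z : Fin m → ℂ)
    (l q R : ℂ → ℂ)
    (hl : ∀ s, l s = ∏ i, (s - x i))
    (hq : ∀ s, q s = ∏ j, (s - z j))
    (hR : ∀ X, R X = ∑ i, f (x i) * (q (x i) / q X) *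
      ∏ j ∈ univ.erase i, (X - x j) / (x i - x j))
    (X : ℂ) (hX : X ∈ Metric.ball c r) (hqX : q X ≠ 0) :
    f X - R X = (1 / (2 * (Real.pi : ℂ) * Complex.I)) *
      ∮ t in C(c, r), (l X * q t) / (l t * q X) * (f t / (t - X)) := by
  have hRX : R X = (interpolate univ x fun i => q (x i) * f (x i)).eval X / q X := by
    rw [hR, interpolate_apply, eval_finsetSum, sum_div]
    refine Finset.sum_congr rfl fun i _ => ?_
    rw [eval_mul, eval_C, eval_basis_eq_prod]
    ring
  by_cases hnode : ∃ k, X = x k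
  · obtain ⟨k, rfl⟩ := hnode
    have hl0 : l (x k) = 0 := by rw [hl]; exact prod_eq_zero (mem_univ k) (sub_self _)
    rw [hRX, eval_interpolate_at_node _ hx.injOn (mem_univ k), mul_div_cancel_left₀ _ hqX]
    simp [hl0, circleIntegral]
  push Not at hnode
  have hqf : DifferentiableOn ℂ (fun t => q t * f t) (closedBall c r) := by
    have hq' : Differentiable ℂ q := by rw [funext hq]; fun_prop
    exact hq'.differentiableOn.mul (hf.mono hUsub)
  have hlX : l X ≠ 0 := by
    rw [hl]; exact prod_ne_zero_iff.mpr fun i _ => sub_ne_zero.mpr (hnode i)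
  have hintegrand : (fun t => (l X * q t) / (l t * q X) * (f t / (t - X))) =
      fun t => l X / q X * (q t * f t / ((t - X) * ∏ i, (t - x i))) :=
    funext fun t => by simp only [hl t, div_eq_mul_inv, mul_inv]; ring
  rw [hintegrand, circleIntegral.integral_const_mul, circleIntegral_div_sub_mul_prod_sub hx.injOn
    univ_nonempty hqf (fun i _ => hxball i) hX (fun i _ => hnode i), ← hl X, hRX,
    eval_interpolate_not_at_node _ (fun i _ => hnode i), eval_nodal, ← hl X]
  field_simp

/-- Walsh's Hermite integral formula for rational interpolation with prescribed poles,
with the contour taken to be the circle of center `c` and radius `r`. -/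
theorem hermite_integral_formula_rational (c : ℂ) (r : ℝ) (hr : 0 < r) (f : ℂ → ℂ)
    (U : Set ℂ) (hUopen : IsOpen U) (hUsub : Metric.closedBall c r ⊆ U)
    (hf : DifferentiableOn ℂ f U)
    (n : ℕ) (x : Fin (n + 1) → ℂ) (hx : Function.Injective x)
    (hxball : ∀ i, x i ∈ Metric.ball c r)
    (m : ℕ) (z : Fin m → ℂ) (hz : ∀ j i, z j ≠ x i)
    (l q R : ℂ → ℂ)
    (hl : ∀ s, l s = ∏ i, (s - x i))
    (hq : ∀ s, q s = ∏ j, (s - z j))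
    (hR : ∀ X, R X = ∑ i, f (x i) * (q (x i) / q X) *
      ∏ j ∈ univ.erase i, (X - x j) / (x i - x j))
    (X : ℂ) (hX : X ∈ Metric.ball c r) (hqX : q X ≠ 0) :
    f X - R X = (1 / (2 * (Real.pi : ℂ) * Complex.I)) *
      ∮ t in C(c, r), (l X * q t) / (l t * q X) * (f t / (t - X)) :=
  hermite_integral_formula_rational_general c r f U hUsub hf n x hx hxball m z l q R hl hq hR X hX
    hqX
end

section
/- Let c ∈ ℂ, r > 0, and let f : ℂ → ℂ be complex-differentiable on an open set containing the closed disk {z : |z - c| ≤ r}. Let x_0, …, x_n be distinct points in the open disk {z : |z - c| < r}, let z_1, …, z_m ∈ ℂ with z_j ∉ {x_0, …, x_n} for all j, and define the discrete signed logarithmic potential U(z) = (1/(n+1))·(∑_{i=0}^n log(1/|z - x_i|) - ∑_{j=1}^m log(1/|z - z_j|)) for z ∉ {x_0, …, x_n} ∪ {z_1, …, z_m}. Let r(x) = ∑_{i=0}^n f(x_i)·(q(x_i)/q(x))·∏_{j≠i} (x - x_j)/(x_i - x_j) with q(s) = ∏_{j=1}^m (s - z_j). Then for every x in the open disk {z :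 |z - c| < r} with x ∉ {x_0, …, x_n} and q(x) ≠ 0, |f(x) - r(x)| ≤ (r/(2π))·(∫_0^{2π} |f(c + re^{iθ})|/|c + re^{iθ} - x| dθ)·(exp(sup_{θ∈[0,2π]} U(c + re^{iθ}) - U(x)))^{n+1}. -/
/-!
Write `W(s) = ∏ᵢ (s - xᵢ)` and `ℓᵢ` for the Lagrange basis polynomials. The partial-fraction
identity `W(X) / ((ζ - X) W(ζ)) = 1 / (ζ - X) - ∑ᵢ ℓᵢ(X) / (ζ - xᵢ)`, integrated against `f q`
over the circle, turns Cauchy's formula into the Hermite error formula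
`f(X) - r(X) = (2πi)⁻¹ ∮ W(X) q(ζ) / (W(ζ) q(X)) · f(ζ) / (ζ - X) dζ`.
The kernel factor is `exp ((n + 1) (U(ζ) - U(X)))` in absolute value; at a pole on the circle
it vanishes while `U(ζ)` is finite (because `log 0 = 0`), so only `≤` holds there.
-/

open Finset Metric Real

section Lagrange

variable {K ι : Type*} [Field K] [Fintype ι] [DecidableEq ι] {x : ι → K}

theorem inv_prod_sub_eq_sum_nodalWeight [Nonempty ι] (hx : Function.Injective x) {t : K}
    (ht : ∀ i, t ≠ x i) :
    (∏ i, (t - x i))⁻¹ = ∑ i, Lagrange.nodalWeight univ x i * (t - x i)⁻¹ := by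
  have h := Lagrange.eval_interpolate_not_at_node (s := univ) (v := x) 1 fun i _ => ht i
  rw [Lagrange.interpolate_one hx.injOn univ_nonempty, Polynomial.eval_one,
    Lagrange.eval_nodal] at h
  simpa using (eq_inv_of_mul_eq_one_right h.symm).symm

theorem prod_erase_div_sub_eq_prod_mul_nodalWeight (t : K) (ht : ∀ i, t ≠ x i) (i : ι) :
    ∏ j ∈ univ.erase i, (t - x j) / (x i - x j) =
      (∏ j, (t - x j)) * (Lagrange.nodalWeight univ x i * (t - x i)⁻¹) := by
  rw [← Lagrange.eval_nodal, ← Lagrange.eval_basis_not_at_node (mem_univ i) (ht i)]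
  simp [Lagrange.basis, Lagrange.basisDivisor, Polynomial.eval_prod, div_eq_inv_mul]

theorem prod_div_prod_mul_inv_eq_inv_sub_sum [Nonempty ι] (hx : Function.Injective x)
    {X ζ : K} (hX : ∀ i, X ≠ x i) (hζ : ∀ i, ζ ≠ x i) (hζX : ζ ≠ X) :
    (∏ i, (X - x i)) / (∏ i, (ζ - x i)) * (ζ - X)⁻¹ =
      (ζ - X)⁻¹ - ∑ i, (∏ j ∈ univ.erase i, (X - x j) / (x i - x j)) * (ζ - x i)⁻¹ := by
  have hsub : ζ - X ≠ 0 := sub_ne_zero.2 hζX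
  have hterm : ∀ i, (∏ j ∈ univ.erase i, (X - x j) / (x i - x j)) * (ζ - x i)⁻¹ =
      (∏ j, (X - x j)) * (ζ - X)⁻¹ * (Lagrange.nodalWeight univ x i * (X - x i)⁻¹ -
        Lagrange.nodalWeight univ x i * (ζ - x i)⁻¹) := by
    intro i
    have := sub_ne_zero.2 (hX i)
    have := sub_ne_zero.2 (hζ i)
    rw [prod_erase_div_sub_eq_prod_mul_nodalWeight X hX]
    field_simp
    ring
  have hWX : ∏ i, (X - x i) ≠ 0 := prod_ne_zero_iff.2 fun i _ => sub_ne_zero.2 (hX i)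
  have hWζ : ∏ i, (ζ - x i) ≠ 0 := prod_ne_zero_iff.2 fun i _ => sub_ne_zero.2 (hζ i)
  rw [sum_congr rfl fun i _ => hterm i, ← mul_sum, sum_sub_distrib,
    ← inv_prod_sub_eq_sum_nodalWeight hx hX, ← inv_prod_sub_eq_sum_nodalWeight hx hζ]
  field_simp
  ring

end Lagrange

section Potential

variable {E 𝕜 ι κ : Type*} [Fintype ι] [Fintype κ]

noncomputable def signedLogPotential [SeminormedAddCommGroup E] (x : ι → E) (z : κ → E)
    (s : E) : ℝ :=
  (1 / Fintype.card ι) * (∑ i, log (1 / ‖s - x i‖) - ∑ j, log (1 / ‖s - z j‖))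

theorem signedLogPotential_eq [SeminormedAddCommGroup E] (x : ι → E) (z : κ → E) (s : E) :
    signedLogPotential x z s =
      (Fintype.card ι : ℝ)⁻¹ * (∑ j, log ‖s - z j‖ - ∑ i, log ‖s - x i‖) := by
  simp only [signedLogPotential, one_div, log_inv, sum_neg_distrib]
  ring

theorem bddAbove_signedLogPotential_image_sphere [SeminormedAddCommGroup E] {x : ι → E}
    {c : E} {r : ℝ} (hx : ∀ i, x i ∈ ball c r) (z : κ → E) :
    BddAbove (signedLogPotential x z '' sphere c r) := by
  refine ⟨(Fintype.card ι : ℝ)⁻¹ *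
    (∑ j, (r + ‖c - z j‖) - ∑ i, log (r - ‖x i - c‖)), ?_⟩
  rintro _ ⟨s, hs, rfl⟩
  rw [mem_sphere_iff_norm] at hs
  rw [signedLogPotential_eq]
  gcongr with j _ i _
  · calc log ‖s - z j‖ ≤ ‖s - z j‖ := log_le_self (norm_nonneg _)
      _ ≤ ‖s - c‖ + ‖c - z j‖ := norm_sub_le_norm_sub_add_norm_sub _ _ _
      _ = r + ‖c - z j‖ := by rw [hs]
  · exact sub_pos.2 (mem_ball_iff_norm.1 (hx i))
  · linarith [norm_sub_le_norm_sub_add_norm_sub s (x i) c]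

theorem norm_prod_sub_le_exp_sum_log [NormedField 𝕜] (p : κ → 𝕜) (s : 𝕜) :
    ‖∏ j, (s - p j)‖ ≤ exp (∑ j, log ‖s - p j‖) := by
  rw [norm_prod, exp_sum]
  exact prod_le_prod (fun j _ => norm_nonneg _) fun j _ => le_exp_log _

theorem norm_prod_sub_eq_exp_sum_log [NormedField 𝕜] {p : κ → 𝕜} {s : 𝕜}
    (hs : ∀ j, s ≠ p j) :
    ‖∏ j, (s - p j)‖ = exp (∑ j, log ‖s - p j‖) := by
  rw [norm_prod, exp_sum]
  exact prod_congr rfl fun j _ => (exp_log (norm_pos_iff.2 (sub_ne_zero.2 (hs j)))).symm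

theorem norm_nodal_ratio_le_exp_signedLogPotential [Nonempty ι] [NormedField 𝕜]
    {x : ι → 𝕜} {z : κ → 𝕜} {X ζ : 𝕜} (hX : ∀ i, X ≠ x i) (hXz : ∀ j, X ≠ z j)
    (hζ : ∀ i, ζ ≠ x i) :
    ‖(∏ i, (X - x i)) / (∏ i, (ζ - x i)) * (∏ j, (ζ - z j)) / (∏ j, (X - z j))‖ ≤
      exp (signedLogPotential x z ζ - signedLogPotential x z X) ^ Fintype.card ι := by
  rw [← exp_nat_mul]
  have hcard : (Fintype.card ι : ℝ) ≠ 0 := Nat.cast_ne_zero.2 Fintype.card_ne_zero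
  rw [norm_div, norm_mul, norm_div, norm_prod_sub_eq_exp_sum_log hX,
    norm_prod_sub_eq_exp_sum_log hXz, norm_prod_sub_eq_exp_sum_log hζ,
    signedLogPotential_eq, signedLogPotential_eq, ← mul_sub, mul_inv_cancel_left₀ hcard,
    div_mul_eq_mul_div, div_div, div_le_iff₀ (by positivity), ← exp_add, ← exp_add]
  calc exp (∑ i, log ‖X - x i‖) * ‖∏ j, (ζ - z j)‖
      ≤ exp (∑ i, log ‖X - x i‖) * exp (∑ j, log ‖ζ - z j‖) := by
        gcongr; exact norm_prod_sub_le_exp_sum_log z ζ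
    _ = _ := by rw [← exp_add]; congr 1; ring

end Potential

theorem ne_of_mem_sphere_of_mem_ball {E : Type*} [PseudoMetricSpace E] {c y w : E} {r : ℝ}
    (hy : y ∈ sphere c r) (hw : w ∈ ball c r) : y ≠ w :=
  ne_of_mem_of_not_mem hy (Set.disjoint_right.1 sphere_disjoint_ball hw)

section CauchyIntegral

open Complex

theorem norm_circleIntegral_le_integral {E : Type*} [NormedAddCommGroup E] [NormedSpace ℂ E]
    {g : ℂ → E} {c : ℂ} {r : ℝ} {B : ℝ → ℝ} (hr : 0 ≤ r)
    (hB : IntervalIntegrable B MeasureTheory.volume 0 (2 * π))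
    (h : ∀ θ ∈ Set.Icc 0 (2 * π), r * ‖g (circleMap c r θ)‖ ≤ B θ) :
    ‖∮ z in C(c, r), g z‖ ≤ ∫ θ in (0)..(2 * π), B θ := by
  refine intervalIntegral.norm_integral_le_of_norm_le Real.two_pi_pos.le
    (Filter.Eventually.of_forall fun θ hθ => ?_) hB
  rw [norm_smul, deriv_circleMap, norm_mul, norm_circleMap_zero, Complex.norm_I, mul_one,
    abs_of_nonneg hr]
  exact h θ (Set.Ioc_subset_Icc_self hθ)

variable {ι : Type*} [Fintype ι] [DecidableEq ι] [Nonempty ι] {x : ι → ℂ}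

theorem sub_sum_mul_lagrange_eq_circleIntegral {F : ℂ → ℂ} {c X : ℂ} {r : ℝ}
    (hF : DifferentiableOn ℂ F (closedBall c r)) (hx : Function.Injective x)
    (hxr : ∀ i, x i ∈ ball c r) (hX : X ∈ ball c r) (hXx : ∀ i, X ≠ x i) :
    F X - ∑ i, F (x i) * ∏ j ∈ univ.erase i, (X - x j) / (x i - x j) =
      (2 * π * I)⁻¹ *
        ∮ ζ in C(c, r), (∏ i, (X - x i)) / (∏ i, (ζ - x i)) * ((ζ - X)⁻¹ * F ζ) := by
  have hr : 0 ≤ r := dist_nonneg.trans (mem_ball.1 hX).le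
  have hcont : ∀ w ∈ ball c r, ContinuousOn (fun ζ => (ζ - w)⁻¹ * F ζ) (sphere c r) :=
    fun w hw => ((continuousOn_id.sub continuousOn_const).inv₀ fun ζ hζ =>
      sub_ne_zero.2 (ne_of_mem_sphere_of_mem_ball hζ hw)).mul
        (hF.continuousOn.mono sphere_subset_closedBall)
  have hcauchy : ∀ w ∈ ball c r, ∮ ζ in C(c, r), (ζ - w)⁻¹ * F ζ = 2 * π * I * F w :=
    fun w hw => by simpa only [smul_eq_mul] using hF.circleIntegral_sub_inv_smul hw
  set ℓ : ι → ℂ := fun i => ∏ j ∈ univ.erase i, (X - x j) / (x i - x j)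
  have hkernel : Set.EqOn
      (fun ζ => (∏ i, (X - x i)) / (∏ i, (ζ - x i)) * ((ζ - X)⁻¹ * F ζ))
      (fun ζ => (ζ - X)⁻¹ * F ζ - ∑ i, ℓ i * ((ζ - x i)⁻¹ * F ζ)) (sphere c r) :=
      fun ζ hζ => by
    simp only [← mul_assoc, ← sum_mul, ← sub_mul]
    rw [prod_div_prod_mul_inv_eq_inv_sub_sum hx hXx
      (fun i => ne_of_mem_sphere_of_mem_ball hζ (hxr i)) (ne_of_mem_sphere_of_mem_ball hζ hX)]
  have hterm : ∀ i, CircleIntegrable (fun ζ => ℓ i * ((ζ - x i)⁻¹ * F ζ)) c r := fun i =>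
    (continuousOn_const.mul (hcont _ (hxr i))).circleIntegrable hr
  have hsum : CircleIntegrable (fun ζ => ∑ i, ℓ i * ((ζ - x i)⁻¹ * F ζ)) c r :=
    (continuousOn_finsetSum _ fun i _ =>
      continuousOn_const.mul (hcont _ (hxr i))).circleIntegrable hr
  rw [circleIntegral.integral_congr hr hkernel,
    circleIntegral.integral_sub ((hcont X hX).circleIntegrable hr) hsum,
    circleIntegral.integral_fun_sum fun i _ => hterm i]
  simp only [circleIntegral.integral_const_mul, hcauchy X hX, hcauchy _ (hxr _)]
  have h2πI : (2 * π * I : ℂ) ≠ 0 := by simp [pi_ne_zero, I_ne_zero]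
  rw [mul_sub, mul_sum, inv_mul_cancel_left₀ h2πI]
  congr 1
  refine sum_congr rfl fun i _ => ?_
  rw [mul_left_comm, inv_mul_cancel_left₀ h2πI, mul_comm]

theorem sub_rational_interpolant_eq_circleIntegral {f q : ℂ → ℂ} {c X : ℂ} {r : ℝ}
    (hf : DifferentiableOn ℂ f (closedBall c r)) (hq : DifferentiableOn ℂ q (closedBall c r))
    (hx : Function.Injective x) (hxr : ∀ i, x i ∈ ball c r) (hX : X ∈ ball c r)
    (hXx : ∀ i, X ≠ x i) (hqX : q X ≠ 0) :
    f X - ∑ i, f (x i) * (q (x i) / q X) * ∏ j ∈ univ.erase i, (X - x j) / (x i - x j) =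
      (2 * π * I)⁻¹ * ∮ ζ in C(c, r),
        (∏ i, (X - x i)) / (∏ i, (ζ - x i)) * q ζ / q X * (f ζ / (ζ - X)) := by
  calc _ = (q X)⁻¹ * (f X * q X -
        ∑ i, f (x i) * q (x i) * ∏ j ∈ univ.erase i, (X - x j) / (x i - x j)) := by
        rw [mul_sub, mul_sum]
        congr 1
        · field_simp
        · exact sum_congr rfl fun i _ => by ring
    _ = _ := by
        rw [sub_sum_mul_lagrange_eq_circleIntegral (F := fun s => f s * q s) (hf.mul hq) hx hxr
          hX hXx, mul_left_comm, ← circleIntegral.integral_const_mul]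
        congr 2
        funext ζ
        ring

theorem norm_two_pi_I_inv_mul_circleIntegral_le {ρ g : ℂ → ℂ} {c : ℂ} {r K : ℝ} (hr : 0 ≤ r)
    (hg : ContinuousOn g (sphere c r))
    (hρ : ∀ θ ∈ Set.Icc 0 (2 * π), ‖ρ (circleMap c r θ)‖ ≤ K) :
    ‖(2 * π * I)⁻¹ * ∮ ζ in C(c, r), ρ ζ * g ζ‖ ≤
      r / (2 * π) * (∫ θ in (0)..(2 * π), ‖g (circleMap c r θ)‖) * K := by
  have hint :
      IntervalIntegrable (fun θ => ‖g (circleMap c r θ)‖) MeasureTheory.volume 0 (2 * π) :=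
    (hg.comp_continuous (continuous_circleMap c r)
      (circleMap_mem_sphere c hr)).norm.intervalIntegrable _ _
  have h2πI : ‖(2 * π * I)⁻¹‖ = (2 * π)⁻¹ := by simp [abs_of_pos pi_pos]
  rw [norm_mul, h2πI]
  calc _ ≤ (2 * π)⁻¹ * ∫ θ in (0)..(2 * π), K * (r * ‖g (circleMap c r θ)‖) := by
        gcongr
        refine norm_circleIntegral_le_integral hr ((hint.const_mul r).const_mul K) fun θ hθ => ?_
        rw [norm_mul]
        nlinarith [hρ θ hθ, mul_nonneg hr (norm_nonneg (g (circleMap c r θ)))]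
    _ = _ := by
        rw [intervalIntegral.integral_const_mul, intervalIntegral.integral_const_mul]
        ring

end CauchyIntegral

theorem rational_interpolation_potential_bound_general (c : ℂ) (r : ℝ) (f : ℂ → ℂ)
    (U : Set ℂ) (hUsub : Metric.closedBall c r ⊆ U)
    (hf : DifferentiableOn ℂ f U)
    (n : ℕ) (x : Fin (n + 1) → ℂ) (hx : Function.Injective x)
    (hxball : ∀ i, x i ∈ Metric.ball c r)
    (m : ℕ) (z : Fin m → ℂ)
    (Upot : ℂ → ℝ)
    (hUpot : ∀ s, Upot s = (1 / (n + 1)) *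
      (∑ i, Real.log (1 / ‖s - x i‖) - ∑ j, Real.log (1 / ‖s - z j‖)))
    (q R : ℂ → ℂ)
    (hq : ∀ s, q s = ∏ j, (s - z j))
    (hR : ∀ X, R X = ∑ i, f (x i) * (q (x i) / q X) *
      ∏ j ∈ univ.erase i, (X - x j) / (x i - x j))
    (X : ℂ) (hX : X ∈ Metric.ball c r) (hXnode : ∀ i, X ≠ x i) (hqX : q X ≠ 0) :
    ‖f X - R X‖ ≤ (r / (2 * Real.pi)) *
      (∫ θ in (0:ℝ)..(2 * Real.pi),
        ‖f (c + (r : ℂ) * Complex.exp ((θ : ℂ) * Complex.I))‖ /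
          ‖c + (r : ℂ) * Complex.exp ((θ : ℂ) * Complex.I) - X‖) *
      (Real.exp ((⨆ θ : Set.Icc (0:ℝ) (2 * Real.pi),
          Upot (c + (r : ℂ) * Complex.exp (((θ : ℝ) : ℂ) * Complex.I))) - Upot X)) ^ (n + 1) := by
  have hr : 0 ≤ r := dist_nonneg.trans (mem_ball.1 hX).le
  obtain rfl : Upot = signedLogPotential x z := funext fun s => by
    rw [hUpot, signedLogPotential, Fintype.card_fin]; push_cast; rfl
  have hbdd : BddAbove (Set.range fun θ : Set.Icc (0:ℝ) (2 * π) =>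
      signedLogPotential x z (circleMap c r θ)) :=
    (bddAbove_signedLogPotential_image_sphere hxball z).mono
      (by rintro _ ⟨θ, rfl⟩; exact ⟨_, circleMap_mem_sphere c hr θ, rfl⟩)
  have hXz : ∀ j, X ≠ z j := by simpa [hq, prod_eq_zero_iff, sub_eq_zero] using hqX
  have hfX : ContinuousOn (fun ζ => f ζ / (ζ - X)) (sphere c r) :=
    (hf.continuousOn.mono (sphere_subset_closedBall.trans hUsub)).div
      (continuousOn_id.sub continuousOn_const) fun ζ hζ =>
        sub_ne_zero.2 (ne_of_mem_sphere_of_mem_ball hζ hX)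
  rw [hR, sub_rational_interpolant_eq_circleIntegral (hf.mono hUsub)
    (by rw [funext hq]; fun_prop) hx hxball hX hXnode hqX]
  refine (norm_two_pi_I_inv_mul_circleIntegral_le hr hfX fun θ hθ => ?_).trans_eq
    (by simp only [norm_div]; rfl)
  rw [hq, hq]
  refine (norm_nodal_ratio_le_exp_signedLogPotential hXnode hXz fun i =>
    ne_of_mem_sphere_of_mem_ball (circleMap_mem_sphere c hr θ) (hxball i)).trans ?_
  rw [Fintype.card_fin]
  exact pow_le_pow_left₀ (exp_nonneg _)
    (exp_le_exp.2 (sub_le_sub_right (le_ciSup hbdd ⟨θ, hθ⟩) _)) _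

/-- Potential-form error bound (2d) for rational interpolation with prescribed poles,
with the contour taken to be a circle of center `c` and radius `r`; `Upot` is the
discrete signed logarithmic potential of the nodes and poles. -/
theorem rational_interpolation_potential_bound (c : ℂ) (r : ℝ) (hr : 0 < r) (f : ℂ → ℂ)
    (U : Set ℂ) (hUopen : IsOpen U) (hUsub : Metric.closedBall c r ⊆ U)
    (hf : DifferentiableOn ℂ f U)
    (n : ℕ) (x : Fin (n + 1) → ℂ) (hx : Function.Injective x)
    (hxball : ∀ i, x i ∈ Metric.ball c r)
    (m : ℕ) (z : Fin m → ℂ) (hz : ∀ j i, z j ≠ x i)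
    (Upot : ℂ → ℝ)
    (hUpot : ∀ s, Upot s = (1 / (n + 1)) *
      (∑ i, Real.log (1 / ‖s - x i‖) - ∑ j, Real.log (1 / ‖s - z j‖)))
    (q R : ℂ → ℂ)
    (hq : ∀ s, q s = ∏ j, (s - z j))
    (hR : ∀ X, R X = ∑ i, f (x i) * (q (x i) / q X) *
      ∏ j ∈ univ.erase i, (X - x j) / (x i - x j))
    (X : ℂ) (hX : X ∈ Metric.ball c r) (hXnode : ∀ i, X ≠ x i) (hqX : q X ≠ 0) :
    ‖f X - R X‖ ≤ (r / (2 * Real.pi)) *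
      (∫ θ in (0:ℝ)..(2 * Real.pi),
        ‖f (c + (r : ℂ) * Complex.exp ((θ : ℂ) * Complex.I))‖ /
          ‖c + (r : ℂ) * Complex.exp ((θ : ℂ) * Complex.I) - X‖) *
      (Real.exp ((⨆ θ : Set.Icc (0:ℝ) (2 * Real.pi),
          Upot (c + (r : ℂ) * Complex.exp (((θ : ℝ) : ℂ) * Complex.I))) - Upot X)) ^ (n + 1) :=
  rational_interpolation_potential_bound_general c r f U hUsub hf n x hx hxball m z Upot hUpot q R
    hq hR X hX hXnode hqX
end

section
/- Let x_0, …, x_n be distinct points of ℂ, let z_1, …, z_m ∈ ℂ with m ≤ n and z_j ∉ {x_0, …, x_n} for all j, and set q(s) = ∏_{j=1}^m (s - z_j), λ_k = ∏_{j≠k} 1/(x_k - x_j), and w_k = λ_k·q(x_k). Then for every polynomial p over ℂ with deg p ≤ n and every x ∈ ℂ with x ∉ {x_0, …, x_n} and q(x) ≠ 0, one has ∑_{k=0}^n w_k/(x - x_k) ≠ 0 and (∑_{k=0}^n w_k·(p(x_k)/q(x_k))/(x - x_k)) / (∑_{k=0}^n w_k/(x - x_k)) = p(x)/q(x); that is,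 the rational function p/q with prescribed poles z_1, …, z_m is reproduced by the barycentric rational formula with weights w_k = λ_k·∏_{j=1}^m (x_k - z_j). -/
/-!
Both numerator and denominator are first barycentric forms: for a polynomial `r` of degree
at most `n`, `∑ λ_k r(x_k) / (X - x_k) = r(X) / ℓ(X)` with `ℓ` the nodal polynomial, since `r`
is its own Lagrange interpolant. Applied to `r = q` (of degree `m ≤ n`) and to `r = p`, the factors
`q(x_k)` cancel in the numerator and the common factor `1 / ℓ(X)` cancels in the quotient.
-/

open Finset Polynomial Lagrange

section FirstBarycentricForm

variable {F ι : Type*} [Field F] [DecidableEq ι] {s : Finset ι} {v : ι → F} {x : F}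

theorem eval_eq_eval_nodal_mul_sum_nodalWeight (hvs : Set.InjOn v s) {r : F[X]}
    (hr : r.degree < #s) (hx : ∀ i ∈ s, x ≠ v i) :
    r.eval x =
      (nodal s v).eval x * ∑ i ∈ s, nodalWeight s v i * (x - v i)⁻¹ * r.eval (v i) := by
  conv_lhs => rw [eq_interpolate hvs hr]
  exact eval_interpolate_not_at_node _ hx

theorem sum_nodalWeight_mul_eval_div_sub (hvs : Set.InjOn v s) {r : F[X]}
    (hr : r.degree < #s) (hx : ∀ i ∈ s, x ≠ v i) :
    ∑ i ∈ s, nodalWeight s v i * r.eval (v i) / (x - v i) = r.eval x / (nodal s v).eval x := by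
  rw [eq_div_iff (eval_nodal_not_at_node hx), eval_eq_eval_nodal_mul_sum_nodalWeight hvs hr hx,
    mul_comm]
  congr 1
  exact sum_congr rfl fun i _ => by ring

end FirstBarycentricForm

/-- Barycentric representation (1.1c) of a rational function `p/q` of type `(n, m)` with
prescribed poles `z_1, …, z_m`, with modified weights `w_k = λ_k · ∏_j (x_k - z_j)`. -/
theorem barycentric_formula_rational (n m : ℕ) (hmn : m ≤ n)
    (x : Fin (n + 1) → ℂ) (hx : Function.Injective x)
    (z : Fin m → ℂ) (hz : ∀ j i, z j ≠ x i)
    (q : ℂ → ℂ) (hq : ∀ s, q s = ∏ j, (s - z j))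
    (lam w : Fin (n + 1) → ℂ)
    (hlam : ∀ k, lam k = ∏ j ∈ univ.erase k, (1 / (x k - x j)))
    (hw : ∀ k, w k = lam k * q (x k))
    (p : Polynomial ℂ) (hp : p.degree ≤ n)
    (X : ℂ) (hX : ∀ i, X ≠ x i) (hqX : q X ≠ 0) :
    (∑ k, w k / (X - x k)) ≠ 0 ∧
      (∑ k, w k * (p.eval (x k) / q (x k)) / (X - x k)) / (∑ k, w k / (X - x k))
        = p.eval X / q X := by
  have hinj : Set.InjOn x (univ : Finset (Fin (n + 1))) := hx.injOn
  have hXs : ∀ i ∈ univ, X ≠ x i := fun i _ => hX i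
  have hQ : ∀ s, (nodal univ z).eval s = q s := fun s => by rw [eval_nodal, hq]
  have hqx : ∀ k, q (x k) ≠ 0 := fun k =>
    hQ (x k) ▸ eval_nodal_not_at_node fun j _ => (hz j k).symm
  have hQdeg : (nodal univ z).degree < #(univ : Finset (Fin (n + 1))) := by
    rw [degree_nodal, card_univ, card_univ, Fintype.card_fin, Fintype.card_fin]
    exact_mod_cast Nat.lt_succ_of_le hmn
  have hpdeg : p.degree < #(univ : Finset (Fin (n + 1))) := by
    rw [card_univ, Fintype.card_fin]
    exact hp.trans_lt (by exact_mod_cast Nat.lt_succ_self n)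
  have hw' : ∀ k, w k = nodalWeight univ x k * q (x k) := fun k => by
    simp only [hw, hlam, nodalWeight, one_div]
  have hden : ∑ k, w k / (X - x k) = q X / (nodal univ x).eval X := by
    simp only [hw', ← hQ]
    exact sum_nodalWeight_mul_eval_div_sub hinj hQdeg hXs
  have hnum :
      ∑ k, w k * (p.eval (x k) / q (x k)) / (X - x k) = p.eval X / (nodal univ x).eval X := by
    rw [← sum_nodalWeight_mul_eval_div_sub hinj hpdeg hXs]
    exact sum_congr rfl fun k _ => by rw [hw', mul_assoc, mul_div_cancel₀ _ (hqx k)]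
  have hℓ := eval_nodal_not_at_node hXs
  rw [hnum, hden]
  exact ⟨div_ne_zero hqX hℓ, div_div_div_cancel_right₀ hℓ _ _⟩
end

section
/- Let L > 0 and let w : ℝ → ℝ be continuous on [0, L] with w(t) > 0 for every t ∈ [0, L]. For each n ∈ ℕ let x_0^{(n)} < x_1^{(n)} < … < x_n^{(n)} be points of [0, L], and assume that for all a, b with 0 ≤ a ≤ b ≤ L, the proportion (#{i ∈ {0,…,n} : a ≤ x_i^{(n)} ≤ b})/(n+1) converges to ∫_a^b w(t) dt as n → ∞. Then max_{1 ≤ i ≤ n} (x_i^{(n)} - x_{i-1}^{(n)}) → 0 as n → ∞. -/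
/-!
Cut `[0, L]` into cells `[jδ, (j+1)δ]`. Each cell carries a positive share `∫ w` of the mass,
so for large `n` each of the finitely many cells contains a point. A gap longer than `2δ`
contains a whole cell, hence a point strictly between two consecutive points, which is absurd.
-/

open Filter Topology Finset

lemma eventually_nonempty_of_tendsto_card_div {ι : ℕ → Type*} {s : ∀ n, Finset (ι n)}
    {l : ℝ} (hl : 0 < l) (h : Tendsto (fun n : ℕ => (#(s n) : ℝ) / (n + 1)) atTop (𝓝 l)) :
    ∀ᶠ n in atTop, (s n).Nonempty := by
  filter_upwards [h.eventually (eventually_gt_nhds hl)] with n hn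
  rw [← Finset.card_pos, ← Nat.cast_pos (α := ℝ)]
  exact pos_of_mul_pos_left hn (by positivity : (0 : ℝ) ≤ ((n : ℝ) + 1)⁻¹)

lemma exists_nat_mul_mem_Ioc {δ c : ℝ} (hδ : 0 < δ) (hc : 0 ≤ c) :
    ∃ j : ℕ, c < j * δ ∧ j * δ ≤ c + δ := by
  refine ⟨⌊c / δ⌋₊ + 1, ?_, ?_⟩
  · have := Nat.lt_floor_add_one (c / δ)
    push_cast
    rwa [div_lt_iff₀ hδ] at this
  · have := Nat.floor_le (div_nonneg hc hδ.le)
    rw [le_div_iff₀ hδ] at this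
    push_cast
    linarith

lemma StrictMono.le_of_castSucc_lt {α : Type*} [Preorder α] {n : ℕ} {x : Fin (n + 1) → α}
    (hx : StrictMono x) {i : Fin n} {k : Fin (n + 1)} (h : x i.castSucc < x k) : x i.succ ≤ x k :=
  hx.monotone (Fin.castSucc_lt_iff_succ_le.mp (hx.lt_iff_lt.mp h))

section Gaps

variable {L δ : ℝ} {n : ℕ} {x : Fin (n + 1) → ℝ}

lemma gap_le_of_forall_cell_nonempty (hx : StrictMono x) (hδ : 0 < δ)
    (hmem : ∀ i, x i ∈ Set.Icc 0 L)
    (hcell : ∀ j : ℕ, (j + 1) * δ ≤ L → ∃ k, j * δ ≤ x k ∧ x k ≤ (j + 1) * δ) (i : Fin n) :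
    x i.succ - x i.castSucc ≤ 2 * δ := by
  by_contra! hgap
  obtain ⟨j, hcj, hjc⟩ := exists_nat_mul_mem_Ioc hδ (hmem i.castSucc).1
  have hjd : (j + 1) * δ < x i.succ := by linarith
  obtain ⟨k, hjk, hkj⟩ := hcell j (hjd.le.trans (hmem i.succ).2)
  linarith [hx.le_of_castSucc_lt (hcj.trans_le hjk)]

lemma iSup_gap_le_of_forall_cell_nonempty (hx : StrictMono x) (hδ : 0 < δ)
    (hmem : ∀ i, x i ∈ Set.Icc 0 L)
    (hcell : ∀ j : ℕ, (j + 1) * δ ≤ L → ∃ k, j * δ ≤ x k ∧ x k ≤ (j + 1) * δ) :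
    ⨆ i : Fin n, (x i.succ - x i.castSucc) ≤ 2 * δ :=
  Real.iSup_le (gap_le_of_forall_cell_nonempty hx hδ hmem hcell) (by positivity)

lemma iSup_gap_nonneg (hx : StrictMono x) : 0 ≤ ⨆ i : Fin n, (x i.succ - x i.castSucc) :=
  Real.iSup_nonneg fun _ => sub_nonneg.2 (hx.monotone Fin.castSucc_lt_succ.le)

end Gaps

lemma eventually_forall_cell_nonempty {L δ : ℝ} (hδ : 0 < δ) {x : ∀ n : ℕ, Fin (n + 1) → ℝ}
    (hcell : ∀ a b : ℝ, 0 ≤ a → a < b → b ≤ L →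
      ∀ᶠ n in atTop, ∃ i, a ≤ x n i ∧ x n i ≤ b) :
    ∀ᶠ n in atTop, ∀ j : ℕ, (j + 1) * δ ≤ L → ∃ k, j * δ ≤ x n k ∧ x n k ≤ (j + 1) * δ := by
  have hfin : {j : ℕ | (j + 1) * δ ≤ L}.Finite := by
    refine (Set.finite_Iic ⌊L / δ⌋₊).subset fun j hj => Nat.le_floor ?_
    rw [Set.mem_ofPred_eq, ← le_div_iff₀ hδ] at hj
    linarith
  exact hfin.eventually_all.2 fun j hj =>
    hcell _ _ (by positivity) (by linarith) hj

lemma tendsto_iSup_gap_of_eventually_exists_mem_Icc {L : ℝ} {x : ∀ n : ℕ, Fin (n + 1) → ℝ}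
    (hx_mono : ∀ n, StrictMono (x n)) (hx_mem : ∀ n i, x n i ∈ Set.Icc 0 L)
    (hcell : ∀ a b : ℝ, 0 ≤ a → a < b → b ≤ L →
      ∀ᶠ n in atTop, ∃ i, a ≤ x n i ∧ x n i ≤ b) :
    Tendsto (fun n : ℕ => ⨆ i : Fin n, (x n i.succ - x n i.castSucc)) atTop (𝓝 0) := by
  refine Metric.tendsto_nhds.2 fun ε hε => ?_
  filter_upwards [eventually_forall_cell_nonempty (by positivity : 0 < ε / 3) hcell] with n hn
  have hle := iSup_gap_le_of_forall_cell_nonempty (hx_mono n) (by positivity) (hx_mem n) hn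
  rw [Real.dist_eq, sub_zero, abs_of_nonneg (iSup_gap_nonneg (hx_mono n))]
  linarith

theorem max_gap_tendsto_zero_general (L : ℝ) (w : ℝ → ℝ)
    (hw_cont : ContinuousOn w (Set.Icc 0 L))
    (hw_pos : ∀ t ∈ Set.Icc (0:ℝ) L, 0 < w t)
    (x : ∀ n : ℕ, Fin (n + 1) → ℝ)
    (hx_mono : ∀ n, StrictMono (x n))
    (hx_mem : ∀ n i, x n i ∈ Set.Icc (0:ℝ) L)
    (hdens : ∀ a b : ℝ, 0 ≤ a → a ≤ b → b ≤ L →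
      Filter.Tendsto (fun n : ℕ =>
          (({i : Fin (n + 1) | a ≤ x n i ∧ x n i ≤ b} : Finset (Fin (n + 1))).card : ℝ)
            / (n + 1))
        Filter.atTop (nhds (∫ t in a..b, w t))) :
    Filter.Tendsto (fun n : ℕ => ⨆ i : Fin n, (x n i.succ - x n i.castSucc))
      Filter.atTop (nhds 0) := by
  refine tendsto_iSup_gap_of_eventually_exists_mem_Icc hx_mono hx_mem fun a b ha hab hbL => ?_
  have hsub : Set.Icc a b ⊆ Set.Icc 0 L := Set.Icc_subset_Icc ha hbL
  have hmass : 0 < ∫ t in a..b, w t :=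
    intervalIntegral.intervalIntegral_pos_of_pos_on
      ((hw_cont.mono (Set.uIcc_of_le hab.le ▸ hsub)).intervalIntegrable)
      (fun t ht => hw_pos t (hsub (Set.Ioo_subset_Icc_self ht))) hab
  filter_upwards [eventually_nonempty_of_tendsto_card_div hmass (hdens a b ha hab.le hbL)]
    with n ⟨i, hi⟩
  exact ⟨i, (Finset.mem_filter.1 hi).2⟩

/-- If a family of ordered point sets in `[0, L]` obeys a continuous positive density `w`
(the proportion of points in each subinterval `[a, b]` converges to `∫_a^b w`), then the
maximal gap between consecutive points tends to zero. -/
theorem max_gap_tendsto_zero (L : ℝ) (hL : 0 < L) (w : ℝ → ℝ)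
    (hw_cont : ContinuousOn w (Set.Icc 0 L))
    (hw_pos : ∀ t ∈ Set.Icc (0:ℝ) L, 0 < w t)
    (x : ∀ n : ℕ, Fin (n + 1) → ℝ)
    (hx_mono : ∀ n, StrictMono (x n))
    (hx_mem : ∀ n i, x n i ∈ Set.Icc (0:ℝ) L)
    (hdens : ∀ a b : ℝ, 0 ≤ a → a ≤ b → b ≤ L →
      Filter.Tendsto (fun n : ℕ =>
          (({i : Fin (n + 1) | a ≤ x n i ∧ x n i ≤ b} : Finset (Fin (n + 1))).card : ℝ)
            / (n + 1))
        Filter.atTop (nhds (∫ t in a..b, w t))) :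
    Filter.Tendsto (fun n : ℕ => ⨆ i : Fin n, (x n i.succ - x n i.castSucc))
      Filter.atTop (nhds 0) :=
  max_gap_tendsto_zero_general L w hw_cont hw_pos x hx_mono hx_mem hdens
end
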